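/- With η, ζ, θ as below, one has lim_{t→0⁺} η(t)³ / X₁(t)³ = 1, lim_{t→0⁺} η(t)ζ(t) / X₁(t)³ = 1, and lim_{t→0⁺} θ(t) / X₁(t)³ = 1. -/

import Mathlib

open MeasureTheory Real

/-- `X1 t = (1 - log t)⁻¹`, the first iterated logarithm. -/
noncomputable def X1 (t : ℝ) : ℝ := (1 - Real.log t)⁻¹

/-- `Xi i` is the paper's `X_i` for `i ≥ 1` (`Xi 0` is the identity placeholder);
`X_i = X_1 ∘ X_{i-1}`. -/
noncomputable def Xi : ℕ → ℝ → ℝ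
  | 0, t => t
  | n+1, t => X1 (Xi n t)


noncomputable def eta (t : ℝ) : ℝ := ∑' i : ℕ, ∏ j ∈ Finset.range (i+1), Xi (j+1) t

noncomputable def zeta (t : ℝ) : ℝ := ∑' i : ℕ, ∏ j ∈ Finset.range (i+1), (Xi (j+1) t)^2

noncomputable def theta (t : ℝ) : ℝ :=
  ∑' i : ℕ, ∑ j ∈ Finset.range (i+1),
    (∏ l ∈ Finset.range (j+1), (Xi (l+1) t)^3) *
    (∏ l ∈ Finset.Ico (j+1) (i+1), (Xi (l+1) t)^2)

/-!
Each of `η, ζ, θ` satisfies a one-step recursion in `X₁`: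
`η = X₁ (1 + η ∘ X₁)`, `ζ = X₁² (1 + ζ ∘ X₁)`, `θ = X₁³ (1 + ζ ∘ X₁ + θ ∘ X₁)`,
and `X₁(t) → 0⁺` as `t → 0⁺`, so it suffices that `η, ζ, θ → 0` at `0⁺`.

For `0 < x ≤ 1` write `u = -log x` and `a = 1 - x`; the Padé bound `u ≥ 2a / (2 - a)` gives
`a² (1 + u) ≤ u²`. On the one hand this is `X₁(x) (1 - x)² ≤ (1 - X₁(x))²`, so the products
telescope: `X₁ ⋯ X_{i+1} ≤ X₁ ((1 - X_{i+1}) / (1 - X₁))²`. On the other hand, with the upper Padé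
bound for `log (1 + u)`, it gives `(1 - x)² ≤ 2 (log X₁(x) - log x)`, so that
`∑ (1 - X_{i+1})² ≤ -2 log X₁`. Hence `0 ≤ η ≤ -2 X₁ log X₁ / (1 - X₁)² → 0`, and `ζ ≤ η`, `θ ≤ η²`.
-/

open Real Filter Topology Finset

lemma two_mul_one_sub_le_neg_log_mul_one_add {x : ℝ} (hx0 : 0 < x) (hx1 : x ≤ 1) :
    2 * (1 - x) ≤ -log x * (1 + x) := by
  have h := Real.sum_range_le_log_div (x := (1 - x) / (1 + x)) (by positivity)
    ((div_lt_one (by linarith)).2 (by linarith)) 1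
  have hq : (1 + (1 - x) / (1 + x)) / (1 - (1 - x) / (1 + x)) = x⁻¹ := by
    have : 1 + x ≠ 0 := by linarith
    have : 1 + x - (1 - x) ≠ 0 := by linarith
    field_simp
    ring
  rw [hq, log_inv, sum_range_one] at h
  norm_num at h
  rw [div_le_iff₀ (by linarith)] at h
  linarith

lemma log_one_add_le {u : ℝ} (hu : 0 ≤ u) : log (1 + u) ≤ u * (2 + u) / (2 * (1 + u)) := by
  have h := Real.log_div_le_sum_range_add (x := u / (2 + u)) (by positivity)
    ((div_lt_one (by linarith)).2 (by linarith)) 0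
  have h2u : 2 + u ≠ 0 := by linarith
  have h1u : 1 + u ≠ 0 := by linarith
  have hq : (1 + u / (2 + u)) / (1 - u / (2 + u)) = 1 + u := by
    have : 2 + u - u ≠ 0 := by norm_num
    field_simp
    ring
  have hr : u / (2 + u) / (1 - (u / (2 + u)) ^ 2) = u * (2 + u) / (2 * (1 + u)) / 2 := by
    have : 1 - (u / (2 + u)) ^ 2 = 4 * (1 + u) / (2 + u) ^ 2 := by
      field_simp
      ring
    rw [this]
    field_simp
    ring
  rw [hq, sum_range_zero, mul_zero, zero_add, pow_one, hr] at h
  linarith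

lemma one_sub_sq_mul_one_sub_log_le_log_sq {x : ℝ} (hx0 : 0 < x) (hx1 : x ≤ 1) :
    (1 - x) ^ 2 * (1 - log x) ≤ log x ^ 2 := by
  have hpade := two_mul_one_sub_le_neg_log_mul_one_add hx0 hx1
  set u := -log x with hu
  set a := 1 - x
  -- `w ≥ 0` is the Padé bound `u ≥ 2a / (2 - a)`
  set w := u * (2 - a) - 2 * a
  have hw : 0 ≤ w := by linarith
  have ha : 0 ≤ a * (4 - 2 * a + a ^ 2) := by nlinarith
  have hsq : (2 - a) ^ 2 * (u ^ 2 - a ^ 2 * (1 + u)) =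
      a ^ 4 + w ^ 2 + w * (a * (4 - 2 * a + a ^ 2)) := by
    ring
  have key : 0 ≤ u ^ 2 - a ^ 2 * (1 + u) :=
    nonneg_of_mul_nonneg_right (by rw [hsq]; positivity) (by nlinarith)
  rw [show log x = -u by rw [hu, neg_neg]]
  nlinarith

lemma X1_mem_Ioo {x : ℝ} (hx : x ∈ Set.Ioo 0 1) : X1 x ∈ Set.Ioo 0 1 := by
  have h : 1 < 1 - log x := by linarith [log_neg hx.1 hx.2]
  exact ⟨inv_pos.2 (by linarith), inv_lt_one_of_one_lt₀ h⟩

lemma Xi_mem_Ioo {s : ℝ} (hs : s ∈ Set.Ioo 0 1) (n : ℕ) : Xi n s ∈ Set.Ioo 0 1 := by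
  induction n with
  | zero => exact hs
  | succ n ih => exact X1_mem_Ioo ih

@[simp]
lemma Xi_one (t : ℝ) : Xi 1 t = X1 t := rfl

lemma Xi_succ' (n : ℕ) (t : ℝ) : Xi (n + 1) t = Xi n (X1 t) := by
  induction n with
  | zero => rfl
  | succ n ih => exact congrArg X1 ih

lemma X1_mul_one_sub_sq_le {x : ℝ} (hx0 : 0 < x) (hx1 : x ≤ 1) :
    X1 x * (1 - x) ^ 2 ≤ (1 - X1 x) ^ 2 := by
  have hL : 0 < 1 - log x := by linarith [log_nonpos hx0.le hx1]
  have h1 : 1 - X1 x = -log x / (1 - log x) := by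
    rw [X1]
    field_simp
    ring
  rw [h1, div_pow, neg_sq, X1, inv_mul_eq_div, div_le_div_iff₀ hL (by positivity)]
  calc (1 - x) ^ 2 * (1 - log x) ^ 2 = (1 - x) ^ 2 * (1 - log x) * (1 - log x) := by ring
    _ ≤ log x ^ 2 * (1 - log x) := by
      gcongr
      exact one_sub_sq_mul_one_sub_log_le_log_sq hx0 hx1

lemma one_sub_sq_le_two_mul_log_X1_sub_log {x : ℝ} (hx0 : 0 < x) (hx1 : x ≤ 1) :
    (1 - x) ^ 2 ≤ 2 * (log (X1 x) - log x) := by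
  set u := -log x with hu
  have hu0 : 0 ≤ u := by linarith [log_nonpos hx0.le hx1]
  have hlog := log_one_add_le hu0
  have hsq : (1 - x) ^ 2 ≤ u ^ 2 / (1 + u) := by
    rw [le_div_iff₀ (by linarith)]
    simpa [hu, sub_eq_add_neg] using one_sub_sq_mul_one_sub_log_le_log_sq hx0 hx1
  have h : u * (2 + u) / (2 * (1 + u)) = u - u ^ 2 / (1 + u) / 2 := by
    have : 1 + u ≠ 0 := by linarith
    field_simp
    ring
  rw [X1, log_inv, sub_eq_add_neg 1 (log x), ← hu]
  linarith

noncomputable def iterProd (s : ℝ) (i : ℕ) : ℝ := ∏ j ∈ range (i + 1), Xi (j + 1) s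

noncomputable def etaBound (s : ℝ) : ℝ := -2 * (X1 s * log (X1 s)) / (1 - X1 s) ^ 2

lemma iterProd_zero (s : ℝ) : iterProd s 0 = X1 s := by
  simp [iterProd]

lemma iterProd_succ (s : ℝ) (i : ℕ) : iterProd s (i + 1) = X1 s * iterProd (X1 s) i := by
  rw [iterProd, prod_range_succ', iterProd, mul_comm]
  simp only [zero_add, Xi_succ']
  rfl

lemma iterProd_pos {s : ℝ} (hs : s ∈ Set.Ioo 0 1) (i : ℕ) : 0 < iterProd s i :=
  prod_pos fun j _ => (Xi_mem_Ioo hs (j + 1)).1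

lemma iterProd_le_one {s : ℝ} (hs : s ∈ Set.Ioo 0 1) (i : ℕ) : iterProd s i ≤ 1 :=
  prod_le_one (fun j _ => (Xi_mem_Ioo hs (j + 1)).1.le) fun j _ => (Xi_mem_Ioo hs (j + 1)).2.le

lemma iterProd_mul_sq_le {s : ℝ} (hs : s ∈ Set.Ioo 0 1) (i : ℕ) :
    iterProd s i * (1 - X1 s) ^ 2 ≤ X1 s * (1 - Xi (i + 1) s) ^ 2 := by
  induction i with
  | zero => rw [iterProd_zero, Xi_one]
  | succ i ih =>
    have hx := Xi_mem_Ioo hs (i + 1)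
    calc iterProd s (i + 1) * (1 - X1 s) ^ 2
        = iterProd s i * (1 - X1 s) ^ 2 * X1 (Xi (i + 1) s) := by
          rw [iterProd, prod_range_succ, ← iterProd, mul_right_comm]
          rfl
      _ ≤ X1 s * (1 - Xi (i + 1) s) ^ 2 * X1 (Xi (i + 1) s) := by
          gcongr
          exact (X1_mem_Ioo hx).1.le
      _ ≤ X1 s * (1 - Xi (i + 2) s) ^ 2 := by
          rw [mul_assoc, mul_comm _ (X1 _)]
          gcongr
          · exact (X1_mem_Ioo hs).1.le
          · exact X1_mul_one_sub_sq_le hx.1 hx.2.le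

lemma sum_range_one_sub_Xi_sq_le {s : ℝ} (hs : s ∈ Set.Ioo 0 1) (n : ℕ) :
    ∑ i ∈ range n, (1 - Xi (i + 1) s) ^ 2 ≤ -2 * log (X1 s) :=
  calc ∑ i ∈ range n, (1 - Xi (i + 1) s) ^ 2
      ≤ ∑ i ∈ range n, 2 * (log (Xi (i + 2) s) - log (Xi (i + 1) s)) :=
        sum_le_sum fun i _ =>
          have hx := Xi_mem_Ioo hs (i + 1)
          one_sub_sq_le_two_mul_log_X1_sub_log hx.1 hx.2.le
    _ = 2 * (log (Xi (n + 1) s) - log (X1 s)) := by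
        rw [← mul_sum, sum_range_sub (fun i => log (Xi (i + 1) s))]
        rfl
    _ ≤ -2 * log (X1 s) := by
        linarith [log_nonpos (Xi_mem_Ioo hs (n + 1)).1.le (Xi_mem_Ioo hs (n + 1)).2.le]

lemma sum_range_iterProd_le {s : ℝ} (hs : s ∈ Set.Ioo 0 1) (n : ℕ) :
    ∑ i ∈ range n, iterProd s i ≤ etaBound s := by
  have hX := X1_mem_Ioo hs
  rw [etaBound, le_div_iff₀ (by nlinarith [hX.2]), sum_mul]
  calc ∑ i ∈ range n, iterProd s i * (1 - X1 s) ^ 2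
      ≤ ∑ i ∈ range n, X1 s * (1 - Xi (i + 1) s) ^ 2 :=
        sum_le_sum fun i _ => iterProd_mul_sq_le hs i
    _ = X1 s * ∑ i ∈ range n, (1 - Xi (i + 1) s) ^ 2 := by rw [mul_sum]
    _ ≤ X1 s * (-2 * log (X1 s)) := by gcongr; exacts [hX.1.le, sum_range_one_sub_Xi_sq_le hs n]
    _ = -2 * (X1 s * log (X1 s)) := by ring

lemma tsum_mem_Icc_of_sum_range_le {f : ℕ → ℝ} {c : ℝ} (hf : ∀ i, 0 ≤ f i)
    (h : ∀ n, ∑ i ∈ range n, f i ≤ c) : ∑' i, f i ∈ Set.Icc 0 c :=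
  ⟨tsum_nonneg hf, Real.tsum_le_of_sum_range_le hf h⟩

lemma eta_eq_tsum_iterProd (s : ℝ) : eta s = ∑' i, iterProd s i := rfl

lemma summable_iterProd {s : ℝ} (hs : s ∈ Set.Ioo 0 1) : Summable (iterProd s) :=
  summable_of_sum_range_le (fun i => (iterProd_pos hs i).le) (sum_range_iterProd_le hs)

lemma eta_mem_Icc {s : ℝ} (hs : s ∈ Set.Ioo 0 1) : eta s ∈ Set.Icc 0 (etaBound s) :=
  tsum_mem_Icc_of_sum_range_le (fun i => (iterProd_pos hs i).le) (sum_range_iterProd_le hs)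

lemma zeta_eq_tsum_iterProd_sq (s : ℝ) : zeta s = ∑' i, iterProd s i ^ 2 := by
  simp only [zeta, iterProd, prod_pow]

lemma sum_range_iterProd_sq_le {s : ℝ} (hs : s ∈ Set.Ioo 0 1) (n : ℕ) :
    ∑ i ∈ range n, iterProd s i ^ 2 ≤ etaBound s :=
  (sum_le_sum fun i _ => pow_le_of_le_one (iterProd_pos hs i).le (iterProd_le_one hs i)
    two_ne_zero).trans (sum_range_iterProd_le hs n)

lemma summable_iterProd_sq {s : ℝ} (hs : s ∈ Set.Ioo 0 1) :
    Summable fun i => iterProd s i ^ 2 :=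
  summable_of_sum_range_le (fun _ => sq_nonneg _) (sum_range_iterProd_sq_le hs)

lemma zeta_mem_Icc {s : ℝ} (hs : s ∈ Set.Ioo 0 1) : zeta s ∈ Set.Icc 0 (etaBound s) :=
  zeta_eq_tsum_iterProd_sq s ▸
    tsum_mem_Icc_of_sum_range_le (fun _ => sq_nonneg _) (sum_range_iterProd_sq_le hs)

/-- The `i`-th term of `θ(s)`, by `X₁³⋯X_{j+1}³ X_{j+2}²⋯X_{i+1}² = (X₁⋯X_{j+1}) (X₁⋯X_{i+1})²`. -/
noncomputable def thetaTerm (s : ℝ) (i : ℕ) : ℝ :=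
  (∑ j ∈ range (i + 1), iterProd s j) * iterProd s i ^ 2

lemma theta_eq_tsum_thetaTerm (s : ℝ) : theta s = ∑' i, thetaTerm s i := by
  refine tsum_congr fun i => ?_
  rw [thetaTerm, sum_mul]
  refine sum_congr rfl fun j hj => ?_
  rw [iterProd, iterProd, ← prod_pow,
    ← prod_range_mul_prod_Ico _ (Nat.succ_le_succ (Nat.lt_succ_iff.mp (mem_range.mp hj))),
    ← mul_assoc, ← prod_mul_distrib]
  congr 1
  exact prod_congr rfl fun l _ => by ring

lemma sum_range_thetaTerm_le {s : ℝ} (hs : s ∈ Set.Ioo 0 1) (n : ℕ) :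
    ∑ i ∈ range n, thetaTerm s i ≤ etaBound s ^ 2 :=
  calc ∑ i ∈ range n, thetaTerm s i
      ≤ ∑ i ∈ range n, etaBound s * iterProd s i ^ 2 :=
        sum_le_sum fun i _ => by
          rw [thetaTerm]
          gcongr
          exact sum_range_iterProd_le hs (i + 1)
    _ = etaBound s * ∑ i ∈ range n, iterProd s i ^ 2 := by rw [mul_sum]
    _ ≤ etaBound s ^ 2 := by
        rw [sq]
        gcongr
        exacts [(eta_mem_Icc hs).1.trans (eta_mem_Icc hs).2, sum_range_iterProd_sq_le hs n]

lemma thetaTerm_nonneg {s : ℝ} (hs : s ∈ Set.Ioo 0 1) (i : ℕ) : 0 ≤ thetaTerm s i :=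
  mul_nonneg (sum_nonneg fun j _ => (iterProd_pos hs j).le) (sq_nonneg _)

lemma summable_thetaTerm {s : ℝ} (hs : s ∈ Set.Ioo 0 1) : Summable (thetaTerm s) :=
  summable_of_sum_range_le (thetaTerm_nonneg hs) (sum_range_thetaTerm_le hs)

lemma theta_mem_Icc {s : ℝ} (hs : s ∈ Set.Ioo 0 1) : theta s ∈ Set.Icc 0 (etaBound s ^ 2) :=
  theta_eq_tsum_thetaTerm s ▸
    tsum_mem_Icc_of_sum_range_le (thetaTerm_nonneg hs) (sum_range_thetaTerm_le hs)

lemma eta_eq_X1_mul {s : ℝ} (hs : s ∈ Set.Ioo 0 1) : eta s = X1 s * (1 + eta (X1 s)) := by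
  rw [eta_eq_tsum_iterProd, (summable_iterProd hs).tsum_eq_zero_add]
  simp only [iterProd_zero, iterProd_succ]
  rw [tsum_mul_left, ← eta_eq_tsum_iterProd]
  ring

lemma zeta_eq_X1_sq_mul {s : ℝ} (hs : s ∈ Set.Ioo 0 1) :
    zeta s = X1 s ^ 2 * (1 + zeta (X1 s)) := by
  rw [zeta_eq_tsum_iterProd_sq, (summable_iterProd_sq hs).tsum_eq_zero_add]
  simp only [iterProd_zero, iterProd_succ, mul_pow]
  rw [tsum_mul_left, ← zeta_eq_tsum_iterProd_sq]
  ring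

lemma thetaTerm_zero (s : ℝ) : thetaTerm s 0 = X1 s ^ 3 := by
  rw [thetaTerm, sum_range_one, iterProd_zero]
  ring

lemma thetaTerm_succ (s : ℝ) (i : ℕ) :
    thetaTerm s (i + 1) = X1 s ^ 3 * (iterProd (X1 s) i ^ 2 + thetaTerm (X1 s) i) := by
  rw [thetaTerm, thetaTerm, sum_range_succ', iterProd_succ]
  simp only [iterProd_succ, iterProd_zero]
  rw [← mul_sum]
  ring

lemma theta_eq_X1_cube_mul {s : ℝ} (hs : s ∈ Set.Ioo 0 1) :
    theta s = X1 s ^ 3 * (1 + (zeta (X1 s) + theta (X1 s))) := by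
  have hX := X1_mem_Ioo hs
  rw [theta_eq_tsum_thetaTerm, (summable_thetaTerm hs).tsum_eq_zero_add]
  simp only [thetaTerm_zero, thetaTerm_succ]
  rw [tsum_mul_left, (summable_iterProd_sq hX).tsum_add (summable_thetaTerm hX),
    ← zeta_eq_tsum_iterProd_sq, ← theta_eq_tsum_thetaTerm]
  ring

lemma tendsto_X1 : Tendsto X1 (𝓝[>] 0) (𝓝[>] 0) := by
  have h : Tendsto (fun t => 1 - log t) (𝓝[>] 0) atTop := by
    simpa [sub_eq_add_neg] using
      tendsto_atTop_add_const_left _ 1 (tendsto_neg_atBot_atTop.comp tendsto_log_nhdsGT_zero)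
  refine tendsto_nhdsWithin_iff.2 ⟨tendsto_inv_atTop_zero.comp h, ?_⟩
  filter_upwards [Ioo_mem_nhdsGT (zero_lt_one' ℝ)] with t ht
  exact (X1_mem_Ioo ht).1

lemma tendsto_etaBound : Tendsto etaBound (𝓝[>] 0) (𝓝 0) := by
  have h : ContinuousAt (fun y => -2 * (y * log y) / (1 - y) ^ 2) 0 :=
    ((continuous_mul_log.const_mul _).continuousAt).div (by fun_prop) (by norm_num)
  convert h.tendsto.comp (tendsto_X1.mono_right nhdsWithin_le_nhds) using 2
  exacts [rfl, by simp]

lemma tendsto_nhdsGT_zero_of_mem_Icc {F B : ℝ → ℝ}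
    (hF : ∀ s ∈ Set.Ioo 0 1, F s ∈ Set.Icc 0 (B s)) (hB : Tendsto B (𝓝[>] 0) (𝓝 0)) :
    Tendsto F (𝓝[>] 0) (𝓝 0) := by
  have hmem : ∀ᶠ s in 𝓝[>] (0 : ℝ), F s ∈ Set.Icc 0 (B s) := by
    filter_upwards [Ioo_mem_nhdsGT (zero_lt_one' ℝ)] with s hs using hF s hs
  exact squeeze_zero' (hmem.mono fun _ h => h.1) (hmem.mono fun _ h => h.2) hB

lemma tendsto_div_X1_pow {F G : ℝ → ℝ} (k : ℕ)
    (hF : ∀ s ∈ Set.Ioo 0 1, F s = X1 s ^ k * (1 + G (X1 s)))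
    (hG : Tendsto G (𝓝[>] 0) (𝓝 0)) : Tendsto (fun t => F t / X1 t ^ k) (𝓝[>] 0) (𝓝 1) := by
  have h : Tendsto (fun t => 1 + G (X1 t)) (𝓝[>] 0) (𝓝 1) := by
    simpa using (hG.comp tendsto_X1).const_add 1
  refine h.congr' ?_
  filter_upwards [Ioo_mem_nhdsGT (zero_lt_one' ℝ)] with t ht
  rw [hF t ht, mul_div_cancel_left₀ _ (pow_ne_zero k (X1_mem_Ioo ht).1.ne')]

open Filter in
/-- As `t → 0⁺`, `η(t)³/X₁(t)³ → 1`, `η(t)ζ(t)/X₁(t)³ → 1` and `θ(t)/X₁(t)³ → 1`. -/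
theorem eta_zeta_theta_asymptotics :
    Tendsto (fun t => eta t ^ 3 / (Xi 1 t) ^ 3) (nhdsWithin 0 (Set.Ioi 0)) (nhds 1) ∧
    Tendsto (fun t => eta t * zeta t / (Xi 1 t) ^ 3) (nhdsWithin 0 (Set.Ioi 0)) (nhds 1) ∧
    Tendsto (fun t => theta t / (Xi 1 t) ^ 3) (nhdsWithin 0 (Set.Ioi 0)) (nhds 1) := by
  have hη₀ := tendsto_nhdsGT_zero_of_mem_Icc (fun _ => eta_mem_Icc) tendsto_etaBound
  have hζ₀ := tendsto_nhdsGT_zero_of_mem_Icc (fun _ => zeta_mem_Icc) tendsto_etaBound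
  have hθ₀ := tendsto_nhdsGT_zero_of_mem_Icc (fun _ => theta_mem_Icc)
    (by simpa using tendsto_etaBound.pow 2)
  have hη := tendsto_div_X1_pow 1 (fun s hs => (eta_eq_X1_mul hs).trans (by rw [pow_one])) hη₀
  have hζ := tendsto_div_X1_pow 2 (fun _ => zeta_eq_X1_sq_mul) hζ₀
  have hθ := tendsto_div_X1_pow 3 (fun _ => theta_eq_X1_cube_mul) (by simpa using hζ₀.add hθ₀)
  refine ⟨?_, ?_, by simpa using hθ⟩
  · simpa [div_pow] using hη.pow 3
  · convert hη.mul hζ using 2 with t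
    · simp only [Xi_one]
      ring
    · norm_num
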